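/- arXiv:1803.04124 — 2 statements merged into one kernel-verified Lean document; each statement's English description precedes it below -/
import Mathlib

section
/- Let A and C be comonoids and B a cocommutative comonoid in M, and let f : C → B be a comonoid morphism satisfying (f⊗1_C)∘δ_C = (f⊗1_C)∘c∘δ_C. Let j : E → A⊗B⊗C be the equalizer of the two morphisms A⊗B⊗C → A⊗B⊗B⊗C given as follows: the first is (1_{A⊗B}⊗(ε_A⊗1_B)⊗1_C)∘(δ_{A⊗B}⊗1_C), where δ_{A⊗B} := (1_A⊗c_{A,B}⊗1_B)∘(δ_A⊗δ_B), and the second is (1_{A⊗B}⊗f⊗1_C)∘(1_{A⊗B}⊗δ_C). Then (1_A⊗ε_B⊗1_C)∘j : E → A⊗C is an isomorphism, whose inverse is the unique morphism h : A⊗C → E with j∘h = (1_A⊗f⊗1_C)∘(1_A⊗δ_C). -/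
open CategoryTheory Category MonoidalCategory Limits

universe v u

variable {C : Type u} [Category.{v} C] [MonoidalCategory C]

/-- The middle-four interchange `(W ⊗ X) ⊗ (Y ⊗ Z) ⟶ (W ⊗ Y) ⊗ (X ⊗ Z)`,
i.e. `1 ⊗ c ⊗ 1` with the (suppressed) coherence isomorphisms inserted. -/
def mid4 [BraidedCategory C] (W X Y Z : C) :
    (W ⊗ X) ⊗ (Y ⊗ Z) ⟶ (W ⊗ Y) ⊗ (X ⊗ Z) :=
  (α_ W X (Y ⊗ Z)).hom ≫ (W ◁ (α_ X Y Z).inv) ≫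
    (W ◁ ((β_ X Y).hom ▷ Z)) ≫ (W ◁ (α_ Y X Z).hom) ≫ (α_ W Y (X ⊗ Z)).inv

/-- A monoid structure `(A, m, u)` on the object `A`. -/
structure MonObj' (A : C) where
  mul : A ⊗ A ⟶ A
  one : 𝟙_ C ⟶ A
  one_mul : (one ▷ A) ≫ mul = (λ_ A).hom
  mul_one : (A ◁ one) ≫ mul = (ρ_ A).hom
  mul_assoc : (mul ▷ A) ≫ mul = (α_ A A A).hom ≫ (A ◁ mul) ≫ mul

/-- A comonoid structure `(A, δ, ε)` on the object `A`. -/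
structure ComonObj' (A : C) where
  comul : A ⟶ A ⊗ A
  counit : A ⟶ 𝟙_ C
  counit_comul : comul ≫ (counit ▷ A) = (λ_ A).inv
  comul_counit : comul ≫ (A ◁ counit) = (ρ_ A).inv
  comul_assoc : comul ≫ (comul ▷ A) ≫ (α_ A A A).hom = comul ≫ (A ◁ comul)

/-- A bimonoid structure on the object `A`: a monoid and comonoid structure such that
the comultiplication and counit are monoid morphisms (`A ⊗ A` carrying the multiplication
`(m ⊗ m) ∘ (1 ⊗ c ⊗ 1)` and unit `u ⊗ u`). -/
structure BimonObj' [BraidedCategory C] (A : C) extends MonObj' A, ComonObj' A where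
  mul_comul : mul ≫ comul = (comul ⊗ₘ comul) ≫ mid4 A A A A ≫ (mul ⊗ₘ mul)
  one_comul : one ≫ comul = (λ_ (𝟙_ C)).inv ≫ (one ⊗ₘ one)
  mul_counit : mul ≫ counit = (counit ⊗ₘ counit) ≫ (λ_ (𝟙_ C)).hom
  one_counit : one ≫ counit = 𝟙 (𝟙_ C)

/-- `f` is a morphism of monoids. -/
def IsMonHom {A B : C} (MA : MonObj' A) (MB : MonObj' B) (f : A ⟶ B) : Prop :=
  MA.mul ≫ f = (f ⊗ₘ f) ≫ MB.mul ∧ MA.one ≫ f = MB.one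

/-- `f` is a morphism of comonoids. -/
def IsComonHom {A B : C} (MA : ComonObj' A) (MB : ComonObj' B) (f : A ⟶ B) : Prop :=
  f ≫ MB.comul = MA.comul ≫ (f ⊗ₘ f) ∧ f ≫ MB.counit = MA.counit

/-- `f` is a morphism of bimonoids (preserves all four structure maps). -/
def IsBimonHom [BraidedCategory C] {A B : C} (MA : BimonObj' A) (MB : BimonObj' B)
    (f : A ⟶ B) : Prop :=
  IsMonHom MA.toMonObj' MB.toMonObj' f ∧ IsComonHom MA.toComonObj' MB.toComonObj' f

/-- `z` is an antipode for the bimonoid `M`, i.e. `M` is a Hopf monoid. -/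
def IsAntipode [BraidedCategory C] {B : C} (M : BimonObj' B) (z : B ⟶ B) : Prop :=
  M.comul ≫ (z ▷ B) ≫ M.mul = M.counit ≫ M.one ∧
    M.comul ≫ (B ◁ z) ≫ M.mul = M.counit ≫ M.one

/-- A comonoid is cocommutative when `c ∘ δ = δ`. -/
def IsCocomm [BraidedCategory C] {A : C} (M : ComonObj' A) : Prop :=
  M.comul ≫ (β_ A A).hom = M.comul

set_option linter.unusedSectionVars false

section helpers
variable [BraidedCategory C]

lemma braid_eps {X Y : C} (ε : X ⟶ 𝟙_ C) :
    (β_ X Y).hom ≫ (Y ◁ ε) ≫ (ρ_ Y).hom = (ε ▷ Y) ≫ (λ_ Y).hom := by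
  rw [← assoc, ← BraidedCategory.braiding_naturality_left ε Y, assoc]
  simp

lemma core1 {A B : C} (δA : A ⟶ A ⊗ A) (εA : A ⟶ 𝟙_ C) (δB : B ⟶ B ⊗ B) :
    (δA ⊗ₘ δB) ≫ mid4 A A B B ≫ ((A ⊗ B) ◁ ((εA ▷ B) ≫ (λ_ B).hom))
      = ((δA ≫ (A ◁ εA) ≫ (ρ_ A).hom) ⊗ₘ δB) ≫ (α_ A B B).inv := by
  calc (δA ⊗ₘ δB) ≫ mid4 A A B B ≫ ((A ⊗ B) ◁ ((εA ▷ B) ≫ (λ_ B).hom))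
      = (A ◁ δB) ≫ (δA ▷ (B ⊗ B)) ≫ (α_ A A (B ⊗ B)).hom ≫ (A ◁ (α_ A B B).inv) ≫
          (A ◁ (((β_ A B).hom ≫ (B ◁ εA) ≫ (ρ_ B).hom) ▷ B)) ≫ (α_ A B B).inv := by
        rw [tensorHom_def']; simp only [mid4]; monoidal
    _ = (A ◁ δB) ≫ (δA ▷ (B ⊗ B)) ≫ (α_ A A (B ⊗ B)).hom ≫ (A ◁ (α_ A B B).inv) ≫
          (A ◁ (((εA ▷ B) ≫ (λ_ B).hom) ▷ B)) ≫ (α_ A B B).inv := by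
        rw [braid_eps]
    _ = ((δA ≫ (A ◁ εA) ≫ (ρ_ A).hom) ⊗ₘ δB) ≫ (α_ A B B).inv := by
        rw [tensorHom_def']; monoidal

lemma core1' {A B : C} (δA : A ⟶ A ⊗ A) (εA : A ⟶ 𝟙_ C)
    (hA : δA ≫ (A ◁ εA) = (ρ_ A).inv) (δB : B ⟶ B ⊗ B) :
    (δA ⊗ₘ δB) ≫ mid4 A A B B ≫ ((A ⊗ B) ◁ ((εA ▷ B) ≫ (λ_ B).hom))
      = (A ◁ δB) ≫ (α_ A B B).inv := by
  rw [core1, ← assoc, hA, Iso.inv_hom_id, id_tensorHom]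

lemma Lsimp {A B D : C} (δA : A ⟶ A ⊗ A) (εA : A ⟶ 𝟙_ C)
    (hA : δA ≫ (A ◁ εA) = (ρ_ A).inv) (δB : B ⟶ B ⊗ B) :
    (((δA ⊗ₘ δB) ≫ mid4 A A B B) ▷ D) ≫ (((A ⊗ B) ◁ ((εA ▷ B) ≫ (λ_ B).hom)) ▷ D)
      = ((A ◁ δB) ≫ (α_ A B B).inv) ▷ D := by
  rw [← comp_whiskerRight, assoc, core1' δA εA hA δB]

lemma Lm {A B D : C} (δA : A ⟶ A ⊗ A) (εA : A ⟶ 𝟙_ C)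
    (hA : δA ≫ (A ◁ εA) = (ρ_ A).inv)
    (δB : B ⟶ B ⊗ B) (εB : B ⟶ 𝟙_ C) (hB : δB ≫ (εB ▷ B) = (λ_ B).inv) :
    ((((δA ⊗ₘ δB) ≫ mid4 A A B B) ▷ D) ≫ (((A ⊗ B) ◁ ((εA ▷ B) ≫ (λ_ B).hom)) ▷ D)) ≫
      ((((A ◁ εB) ≫ (ρ_ A).hom) ▷ B) ▷ D) = 𝟙 ((A ⊗ B) ⊗ D) := by
  rw [Lsimp δA εA hA δB, ← comp_whiskerRight]
  have : ((A ◁ δB) ≫ (α_ A B B).inv) ≫ (((A ◁ εB) ≫ (ρ_ A).hom) ▷ B) = 𝟙 (A ⊗ B) := by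
    calc ((A ◁ δB) ≫ (α_ A B B).inv) ≫ (((A ◁ εB) ≫ (ρ_ A).hom) ▷ B)
        = A ◁ (δB ≫ (εB ▷ B) ≫ (λ_ B).hom) := by monoidal
      _ = 𝟙 (A ⊗ B) := by rw [← assoc, hB]; simp
  rw [this, MonoidalCategory.id_whiskerRight]

lemma kq {A B D : C} (f : D ⟶ B) (εB : B ⟶ 𝟙_ C) (εD : D ⟶ 𝟙_ C) (δD : D ⟶ D ⊗ D)
    (hf2 : f ≫ εB = εD) (hD : δD ≫ (εD ▷ D) = (λ_ D).inv) :
    ((A ◁ (δD ≫ (f ▷ D))) ≫ (α_ A B D).inv) ≫ (((A ◁ εB) ≫ (ρ_ A).hom) ▷ D)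
      = 𝟙 (A ⊗ D) := by
  calc ((A ◁ (δD ≫ (f ▷ D))) ≫ (α_ A B D).inv) ≫ (((A ◁ εB) ≫ (ρ_ A).hom) ▷ D)
      = A ◁ (δD ≫ ((f ≫ εB) ▷ D) ≫ (λ_ D).hom) := by monoidal
    _ = 𝟙 (A ⊗ D) := by rw [hf2, ← assoc, hD]; simp

lemma Rm {A B D : C} (y : D ⟶ B ⊗ D) (εB : B ⟶ 𝟙_ C) :
    (((A ⊗ B) ◁ y) ≫ (α_ (A ⊗ B) B D).inv) ≫ ((((A ◁ εB) ≫ (ρ_ A).hom) ▷ B) ▷ D)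
      = ((((A ◁ εB) ≫ (ρ_ A).hom) ▷ D)) ≫ (A ◁ y) ≫ (α_ A B D).inv := by
  have h1 : (((A ⊗ B) ◁ y) ≫ (α_ (A ⊗ B) B D).inv) ≫ ((((A ◁ εB) ≫ (ρ_ A).hom) ▷ B) ▷ D)
      = (((A ◁ εB) ≫ (ρ_ A).hom) ⊗ₘ y) ≫ (α_ A B D).inv := by
    rw [tensorHom_def']; monoidal
  have h2 : ((((A ◁ εB) ≫ (ρ_ A).hom) ▷ D)) ≫ (A ◁ y) ≫ (α_ A B D).inv
      = (((A ◁ εB) ≫ (ρ_ A).hom) ⊗ₘ y) ≫ (α_ A B D).inv := by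
    rw [MonoidalCategory.tensorHom_def]; monoidal
  rw [h1, h2]

lemma wlem {B D : C} (f : D ⟶ B) (δD : D ⟶ D ⊗ D)
    (hassoc : δD ≫ (δD ▷ D) ≫ (α_ D D D).hom = δD ≫ (D ◁ δD)) :
    δD ≫ (f ▷ D) ≫ (B ◁ δD) ≫ (B ◁ (f ▷ D)) ≫ (α_ B B D).inv
      = δD ≫ (δD ▷ D) ≫ ((f ⊗ₘ f) ▷ D) := by
  have e1 : (f ▷ D) ≫ (B ◁ δD) = (D ◁ δD) ≫ (f ▷ (D ⊗ D)) := (whisker_exchange f δD).symm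
  calc δD ≫ (f ▷ D) ≫ (B ◁ δD) ≫ (B ◁ (f ▷ D)) ≫ (α_ B B D).inv
      = δD ≫ ((f ▷ D) ≫ (B ◁ δD)) ≫ (B ◁ (f ▷ D)) ≫ (α_ B B D).inv := by simp [assoc]
    _ = δD ≫ ((D ◁ δD) ≫ (f ▷ (D ⊗ D))) ≫ (B ◁ (f ▷ D)) ≫ (α_ B B D).inv := by rw [e1]
    _ = δD ≫ (D ◁ δD) ≫ (α_ D D D).inv ≫ ((f ⊗ₘ f) ▷ D) := by
        rw [MonoidalCategory.tensorHom_def]; monoidal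
    _ = δD ≫ (δD ▷ D) ≫ ((f ⊗ₘ f) ▷ D) := by
        rw [← assoc, ← assoc, ← hassoc]; simp [assoc]

end helpers

theorem statement15 [SymmetricCategory C] {A B D E : C}
    (CA : ComonObj' A) (CB : ComonObj' B) (CD : ComonObj' D)
    (hcoc : IsCocomm CB)
    (f : D ⟶ B) (hf : IsComonHom CD CB f)
    (hfc : CD.comul ≫ (f ▷ D) = CD.comul ≫ (β_ D D).hom ≫ (f ▷ D))
    (j : E ⟶ (A ⊗ B) ⊗ D)
    (hw : j ≫ ((((CA.comul ⊗ₘ CB.comul) ≫ mid4 A A B B) ▷ D) ≫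
        (((A ⊗ B) ◁ ((CA.counit ▷ B) ≫ (λ_ B).hom)) ▷ D)) =
      j ≫ (((A ⊗ B) ◁ (CD.comul ≫ (f ▷ D))) ≫ (α_ (A ⊗ B) B D).inv))
    (hE : IsLimit (Fork.ofι j hw)) :
    ∃ h : A ⊗ D ⟶ E,
      h ≫ j = (A ◁ (CD.comul ≫ (f ▷ D))) ≫ (α_ A B D).inv ∧
      (∀ h' : A ⊗ D ⟶ E,
          h' ≫ j = (A ◁ (CD.comul ≫ (f ▷ D))) ≫ (α_ A B D).inv → h' = h) ∧
      (j ≫ (((A ◁ CB.counit) ≫ (ρ_ A).hom) ▷ D)) ≫ h = 𝟙 E ∧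
      h ≫ (j ≫ (((A ◁ CB.counit) ≫ (ρ_ A).hom) ▷ D)) = 𝟙 (A ⊗ D) := by
  set k : A ⊗ D ⟶ (A ⊗ B) ⊗ D := (A ◁ (CD.comul ≫ (f ▷ D))) ≫ (α_ A B D).inv with hkdef
  set s : A ⊗ ((B ⊗ B) ⊗ D) ⟶ ((A ⊗ B) ⊗ B) ⊗ D :=
    (α_ A (B ⊗ B) D).inv ≫ ((α_ A B B).inv ▷ D) with hsdef
  -- k equalizes
  have hkL : k ≫ ((((CA.comul ⊗ₘ CB.comul) ≫ mid4 A A B B) ▷ D) ≫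
      (((A ⊗ B) ◁ ((CA.counit ▷ B) ≫ (λ_ B).hom)) ▷ D)) =
      (A ◁ (CD.comul ≫ (CD.comul ▷ D) ≫ ((f ⊗ₘ f) ▷ D))) ≫ s := by
    rw [← assoc, hkdef, assoc, Lsimp CA.comul CA.counit CA.comul_counit CB.comul]
    calc ((A ◁ (CD.comul ≫ (f ▷ D))) ≫ (α_ A B D).inv) ≫ (((A ◁ CB.comul) ≫ (α_ A B B).inv) ▷ D)
        = (A ◁ (CD.comul ≫ ((f ≫ CB.comul) ▷ D))) ≫ s := by rw [hsdef]; monoidal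
      _ = (A ◁ (CD.comul ≫ ((CD.comul ≫ (f ⊗ₘ f)) ▷ D))) ≫ s := by rw [hf.1]
      _ = (A ◁ (CD.comul ≫ (CD.comul ▷ D) ≫ ((f ⊗ₘ f) ▷ D))) ≫ s := by
          rw [comp_whiskerRight]
  have hkR : k ≫ (((A ⊗ B) ◁ (CD.comul ≫ (f ▷ D))) ≫ (α_ (A ⊗ B) B D).inv) =
      (A ◁ (CD.comul ≫ (CD.comul ▷ D) ≫ ((f ⊗ₘ f) ▷ D))) ≫ s := by
    calc k ≫ (((A ⊗ B) ◁ (CD.comul ≫ (f ▷ D))) ≫ (α_ (A ⊗ B) B D).inv)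
        = (A ◁ (CD.comul ≫ (f ▷ D) ≫ (B ◁ CD.comul) ≫ (B ◁ (f ▷ D)) ≫ (α_ B B D).inv)) ≫ s := by
          rw [hkdef, hsdef]; monoidal
      _ = (A ◁ (CD.comul ≫ (CD.comul ▷ D) ≫ ((f ⊗ₘ f) ▷ D))) ≫ s := by
          rw [wlem f CD.comul CD.comul_assoc]
  have hk : k ≫ ((((CA.comul ⊗ₘ CB.comul) ≫ mid4 A A B B) ▷ D) ≫
      (((A ⊗ B) ◁ ((CA.counit ▷ B) ≫ (λ_ B).hom)) ▷ D)) =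
      k ≫ (((A ⊗ B) ◁ (CD.comul ≫ (f ▷ D))) ≫ (α_ (A ⊗ B) B D).inv) := hkL.trans hkR.symm
  obtain ⟨h, hh⟩ := Fork.IsLimit.lift' hE k hk
  simp only [Fork.ι_ofι] at hh
  refine ⟨h, hh, ?_, ?_, ?_⟩
  · intro h' hh'
    apply Fork.IsLimit.hom_ext hE
    simp only [Fork.ι_ofι]
    rw [hh', hh]
  · -- p ≫ h = 𝟙 E
    apply Fork.IsLimit.hom_ext hE
    simp only [Fork.ι_ofι, assoc, id_comp]
    rw [hh, hkdef]
    have hRm := Rm (A := A) (CD.comul ≫ (f ▷ D)) CB.counit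
    simp only [assoc] at hRm
    rw [← hRm, ← reassoc_of% hw]
    have hLm := Lm (D := D) CA.comul CA.counit CA.comul_counit CB.comul CB.counit CB.counit_comul
    simp only [assoc] at hLm
    rw [hLm, comp_id]
  · rw [← assoc, hh, hkdef]
    exact kq f CB.counit CD.counit CD.comul hf.2 CD.counit_comul
end

section
/- Let B and Y be bimonoids in M with B cocommutative, and let k : Y → B be a bimonoid morphism satisfying (k⊗1_Y)∘δ_Y = (k⊗1_Y)∘c∘δ_Y. Let j : E → (Y⊗B)⊗(Y⊗B) be the equalizer of the two morphisms (Y⊗B)⊗(Y⊗B) → (Y⊗B)⊗B⊗(Y⊗B) given by (1_{Y⊗B}⊗(ε_Y⊗1_B)⊗1_{Y⊗B})∘(δ_{Y⊗B}⊗1_{Y⊗B}) and (1_{Y⊗B}⊗(m_B∘(k⊗1_B))⊗1_{Y⊗B})∘(1_{Y⊗B}⊗δ_{Y⊗B}), where δ_{Y⊗B} := (1_Y⊗c_{Y,B}⊗1_B)∘(δ_Y⊗δ_B). Then the morphism (1_Y⊗ε_B⊗1_Y⊗1_B)∘j : E → Y⊗Y⊗B is an isomorphism. -/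
open CategoryTheory Category MonoidalCategory Limits

universe v u

variable {C : Type u} [Category.{v} C] [MonoidalCategory C]

/-! The equalizer `E` is the cotensor product over `B` of the right comodule `Y ⊗ B`, with
coaction `1_Y ⊗ δ_B`, and the left comodule `Y ⊗ B`, with coaction `(κ ⊗ 1) ∘ δ_{Y⊗B}`, where
`κ = m_B ∘ (k ⊗ 1) : Y ⊗ B → B` is a comonoid morphism. The right comodule is cofree on `Y`, and
the cotensor product of the cofree comodule `Y ⊗ B` with a left comodule `(N, h)` is `Y ⊗ N`:
the inverse of the projection `1_Y ⊗ ε_B ⊗ 1_N` is induced by `1_Y ⊗ h`. -/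

namespace ComonObj'

variable {A B : C}

abbrev toComonObj (M : ComonObj' A) : ComonObj A where
  counit := M.counit
  comul := M.comul
  counit_comul := M.counit_comul
  comul_counit := M.comul_counit
  comul_assoc := M.comul_assoc.symm

def tensor [BraidedCategory C] (MA : ComonObj' A) (MB : ComonObj' B) : ComonObj' (A ⊗ B) where
  comul := (MA.comul ⊗ₘ MB.comul) ≫ tensorμ A A B B
  counit := (MA.counit ⊗ₘ MB.counit) ≫ (λ_ _).hom
  counit_comul := by
    let := MA.toComonObj; let := MB.toComonObj
    exact Comon.tensorObj_comul A B ▸ ComonObj.counit_comul (A ⊗ B)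
  comul_counit := by
    let := MA.toComonObj; let := MB.toComonObj
    exact Comon.tensorObj_comul A B ▸ ComonObj.comul_counit (A ⊗ B)
  comul_assoc := by
    let := MA.toComonObj; let := MB.toComonObj
    exact Comon.tensorObj_comul A B ▸ (ComonObj.comul_assoc (A ⊗ B)).symm

theorem tensor_comul_whiskerLeft_counit_whiskerRight [BraidedCategory C] {Y B : C}
    (MY : ComonObj' Y) (MB : ComonObj' B) :
    (MY.tensor MB).comul ≫ ((Y ⊗ B) ◁ ((MY.counit ▷ B) ≫ (λ_ B).hom)) =
      (Y ◁ MB.comul) ≫ (α_ Y B B).inv := by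
  have hμ := tensorμ_natural (𝟙 Y) MY.counit (𝟙 B) (𝟙 B)
  simp only [id_tensorHom, tensorHom_id, id_whiskerRight] at hμ
  have hε : (MY.comul ⊗ₘ MB.comul) ≫ ((Y ◁ MY.counit) ▷ (B ⊗ B)) =
      (Y ◁ MB.comul) ≫ ((ρ_ Y).inv ▷ (B ⊗ B)) := by
    rw [← tensorHom_id, tensorHom_comp_tensorHom, MY.comul_counit, comp_id, tensorHom_def']
  have hcoh : ((ρ_ Y).inv ▷ (B ⊗ B)) ≫ tensorμ Y (𝟙_ C) B B ≫ ((Y ⊗ B) ◁ (λ_ B).hom) =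
      (α_ Y B B).inv := by
    simp only [tensorμ, braiding_tensorUnit_left]
    monoidal
  simp only [ComonObj'.tensor, MonoidalCategory.whiskerLeft_comp, assoc]
  rw [← reassoc_of% hμ, reassoc_of% hε, hcoh]

end ComonObj'

theorem IsComonHom.comp {A B D : C} {MA : ComonObj' A} {MB : ComonObj' B} {MD : ComonObj' D}
    {f : A ⟶ B} {g : B ⟶ D} (hf : IsComonHom MA MB f) (hg : IsComonHom MB MD g) :
    IsComonHom MA MD (f ≫ g) :=
  ⟨by rw [assoc, hg.1, reassoc_of% hf.1, tensorHom_comp_tensorHom],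
    by rw [assoc, hg.2, hf.2]⟩

section Braided

variable [BraidedCategory C]

theorem IsComonHom.whiskerRight {A B : C} {MA : ComonObj' A} {MB : ComonObj' B} {f : A ⟶ B}
    (hf : IsComonHom MA MB f) {D : C} (MD : ComonObj' D) :
    IsComonHom (MA.tensor MD) (MB.tensor MD) (f ▷ D) := by
  refine ⟨?_, ?_⟩
  · have hμ := tensorμ_natural f f (𝟙 D) (𝟙 D)
    simp only [tensorHom_id, id_whiskerRight] at hμ
    have hδ : f ▷ D ≫ (MB.comul ⊗ₘ MD.comul) = (MA.comul ⊗ₘ MD.comul) ≫ ((f ⊗ₘ f) ▷ (D ⊗ D)) := by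
      simp only [← tensorHom_id, tensorHom_comp_tensorHom, hf.1, id_comp, comp_id]
    simp only [ComonObj'.tensor, reassoc_of% hδ, hμ, assoc]
  · simp only [ComonObj'.tensor, ← tensorHom_id, tensorHom_comp_tensorHom_assoc, hf.2, id_comp]

theorem BimonObj'.isComonHom_mul {B : C} (MB : BimonObj' B) :
    IsComonHom (MB.toComonObj'.tensor MB.toComonObj') MB.toComonObj' MB.mul :=
  ⟨by rw [MB.mul_comul, ← assoc]; rfl, MB.mul_counit⟩

end Braided

structure IsLeftCoaction {B N : C} (MB : ComonObj' B) (h : N ⟶ B ⊗ N) : Prop where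
  coassoc : h ≫ (MB.comul ▷ N) ≫ (α_ B B N).hom = h ≫ (B ◁ h)
  counit : h ≫ (MB.counit ▷ N) = (λ_ N).inv

theorem IsLeftCoaction.of_isComonHom {A B : C} {MA : ComonObj' A} {MB : ComonObj' B}
    {f : A ⟶ B} (hf : IsComonHom MA MB f) : IsLeftCoaction MB (MA.comul ≫ (f ▷ A)) where
  coassoc := by
    calc (MA.comul ≫ (f ▷ A)) ≫ (MB.comul ▷ A) ≫ (α_ B B A).hom
        = MA.comul ≫ ((MA.comul ≫ (f ⊗ₘ f)) ▷ A) ≫ (α_ B B A).hom := by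
          rw [← hf.1]; simp
      _ = MA.comul ≫ (MA.comul ▷ A) ≫ (α_ A A A).hom ≫ (f ⊗ₘ (f ▷ A)) := by
          rw [comp_whiskerRight, assoc, ← tensorHom_id (f ⊗ₘ f), associator_naturality,
            tensorHom_id]
      _ = (MA.comul ≫ (f ▷ A)) ≫ (B ◁ (MA.comul ≫ (f ▷ A))) := by
          rw [reassoc_of% MA.comul_assoc, MonoidalCategory.tensorHom_def, whisker_exchange_assoc]
          simp only [MonoidalCategory.whiskerLeft_comp, assoc]
  counit := by rw [assoc, ← comp_whiskerRight, hf.2, MA.counit_comul]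

namespace IsLeftCoaction

variable {B N : C} {MB : ComonObj' B} {h : N ⟶ B ⊗ N}

theorem whiskerLeft_equalizes (hh : IsLeftCoaction MB h) (Y : C) :
    ((Y ◁ h) ≫ (α_ Y B N).inv) ≫ (((Y ◁ MB.comul) ≫ (α_ Y B B).inv) ▷ N) =
      ((Y ◁ h) ≫ (α_ Y B N).inv) ≫ ((Y ⊗ B) ◁ h) ≫ (α_ (Y ⊗ B) B N).inv := by
  have hδ : h ≫ (MB.comul ▷ N) = h ≫ (B ◁ h) ≫ (α_ B B N).inv := by
    rw [← reassoc_of% hh.coassoc]; simp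
  calc ((Y ◁ h) ≫ (α_ Y B N).inv) ≫ (((Y ◁ MB.comul) ≫ (α_ Y B B).inv) ▷ N)
      = (Y ◁ (h ≫ (MB.comul ▷ N))) ≫ (α_ Y (B ⊗ B) N).inv ≫ ((α_ Y B B).inv ▷ N) := by
        monoidal
    _ = ((Y ◁ h) ≫ (α_ Y B N).inv) ≫ ((Y ⊗ B) ◁ h) ≫ (α_ (Y ⊗ B) B N).inv := by
        rw [hδ]; monoidal

theorem whiskerLeft_comp_counit (hh : IsLeftCoaction MB h) (Y : C) :
    ((Y ◁ h) ≫ (α_ Y B N).inv) ≫ (((Y ◁ MB.counit) ≫ (ρ_ Y).hom) ▷ N) = 𝟙 (Y ⊗ N) := by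
  calc ((Y ◁ h) ≫ (α_ Y B N).inv) ≫ (((Y ◁ MB.counit) ≫ (ρ_ Y).hom) ▷ N)
      = (Y ◁ (h ≫ (MB.counit ▷ N))) ≫ (α_ Y (𝟙_ C) N).inv ≫ ((ρ_ Y).hom ▷ N) := by monoidal
    _ = 𝟙 (Y ⊗ N) := by rw [hh.counit]; monoidal

theorem counit_comp_whiskerLeft_of_equalizes {Y E : C} {j : E ⟶ (Y ⊗ B) ⊗ N}
    (hw : j ≫ (((Y ◁ MB.comul) ≫ (α_ Y B B).inv) ▷ N) =
      j ≫ ((Y ⊗ B) ◁ h) ≫ (α_ (Y ⊗ B) B N).inv) :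
    j ≫ (((Y ◁ MB.counit) ≫ (ρ_ Y).hom) ▷ N) ≫ (Y ◁ h) ≫ (α_ Y B N).inv = j := by
  have hcounit : ((Y ◁ MB.comul) ≫ (α_ Y B B).inv) ≫ (((Y ◁ MB.counit) ≫ (ρ_ Y).hom) ▷ B) =
      𝟙 (Y ⊗ B) := by
    calc ((Y ◁ MB.comul) ≫ (α_ Y B B).inv) ≫ (((Y ◁ MB.counit) ≫ (ρ_ Y).hom) ▷ B)
        = (Y ◁ (MB.comul ≫ (MB.counit ▷ B))) ≫ (α_ Y (𝟙_ C) B).inv ≫ ((ρ_ Y).hom ▷ B) := by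
          monoidal
      _ = 𝟙 (Y ⊗ B) := by rw [MB.counit_comul]; monoidal
  calc j ≫ (((Y ◁ MB.counit) ≫ (ρ_ Y).hom) ▷ N) ≫ (Y ◁ h) ≫ (α_ Y B N).inv
      = (j ≫ ((Y ⊗ B) ◁ h) ≫ (α_ (Y ⊗ B) B N).inv) ≫
          ((((Y ◁ MB.counit) ≫ (ρ_ Y).hom) ▷ B) ▷ N) := by
        rw [← whisker_exchange_assoc]; simp
    _ = j := by rw [← hw, assoc, ← comp_whiskerRight, hcounit, id_whiskerRight, comp_id]

/- The parallel pair is abstracted by the equations `hf`, `hg`, so that the lemma applies to forks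
whose maps agree with these only up to a proof. -/
theorem isIso_of_isLimit_cotensor (hh : IsLeftCoaction MB h) {Y E : C}
    {f g : (Y ⊗ B) ⊗ N ⟶ ((Y ⊗ B) ⊗ B) ⊗ N}
    (hf : f = ((Y ◁ MB.comul) ≫ (α_ Y B B).inv) ▷ N)
    (hg : g = ((Y ⊗ B) ◁ h) ≫ (α_ (Y ⊗ B) B N).inv)
    {j : E ⟶ (Y ⊗ B) ⊗ N} (hw : j ≫ f = j ≫ g) (hE : IsLimit (Fork.ofι j hw)) :
    IsIso (j ≫ (((Y ◁ MB.counit) ≫ (ρ_ Y).hom) ▷ N)) := by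
  subst hf hg
  have : Mono j := by simpa using mono_of_isLimit_fork hE
  obtain ⟨ψ, hψ⟩ := Fork.IsLimit.lift' hE _ (hh.whiskerLeft_equalizes Y)
  rw [Fork.ι_ofι] at hψ
  refine ⟨ψ, ?_, ?_⟩
  · rw [← cancel_mono j, assoc, assoc, hψ, id_comp, counit_comp_whiskerLeft_of_equalizes hw]
  · rw [← assoc, hψ, hh.whiskerLeft_comp_counit]

end IsLeftCoaction

theorem statement17_general [SymmetricCategory C] {B Y E : C}
    (MB : BimonObj' B)
    (MY : BimonObj' Y)
    (k : Y ⟶ B) (hk : IsBimonHom MY MB k)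
    (j : E ⟶ (Y ⊗ B) ⊗ (Y ⊗ B))
    (hw : j ≫ ((((MY.comul ⊗ₘ MB.comul) ≫ mid4 Y Y B B) ▷ (Y ⊗ B)) ≫
        (((Y ⊗ B) ◁ ((MY.counit ▷ B) ≫ (λ_ B).hom)) ▷ (Y ⊗ B))) =
      j ≫ (((Y ⊗ B) ◁ ((MY.comul ⊗ₘ MB.comul) ≫ mid4 Y Y B B)) ≫
        ((Y ⊗ B) ◁ (((k ▷ B) ≫ MB.mul) ▷ (Y ⊗ B))) ≫
        (α_ (Y ⊗ B) B (Y ⊗ B)).inv))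
    (hE : IsLimit (Fork.ofι j hw)) :
    IsIso (j ≫ (((Y ◁ MB.counit) ≫ (ρ_ Y).hom) ▷ (Y ⊗ B))) := by
  have hκ : IsComonHom (MY.tensor MB.toComonObj') MB.toComonObj' ((k ▷ B) ≫ MB.mul) :=
    (hk.2.whiskerRight MB.toComonObj').comp MB.isComonHom_mul
  refine (IsLeftCoaction.of_isComonHom hκ).isIso_of_isLimit_cotensor ?_ ?_ hw hE
  · rw [← comp_whiskerRight, ← ComonObj'.tensor_comul_whiskerLeft_counit_whiskerRight]
    rfl
  · rw [← MonoidalCategory.whiskerLeft_comp_assoc]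
    rfl

theorem statement17 [SymmetricCategory C] {B Y E : C}
    (MB : BimonObj' B) (hcoc : IsCocomm MB.toComonObj')
    (MY : BimonObj' Y)
    (k : Y ⟶ B) (hk : IsBimonHom MY MB k)
    (hkc : MY.comul ≫ (k ▷ Y) = MY.comul ≫ (β_ Y Y).hom ≫ (k ▷ Y))
    (j : E ⟶ (Y ⊗ B) ⊗ (Y ⊗ B))
    (hw : j ≫ ((((MY.comul ⊗ₘ MB.comul) ≫ mid4 Y Y B B) ▷ (Y ⊗ B)) ≫
        (((Y ⊗ B) ◁ ((MY.counit ▷ B) ≫ (λ_ B).hom)) ▷ (Y ⊗ B))) =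
      j ≫ (((Y ⊗ B) ◁ ((MY.comul ⊗ₘ MB.comul) ≫ mid4 Y Y B B)) ≫
        ((Y ⊗ B) ◁ (((k ▷ B) ≫ MB.mul) ▷ (Y ⊗ B))) ≫
        (α_ (Y ⊗ B) B (Y ⊗ B)).inv))
    (hE : IsLimit (Fork.ofι j hw)) :
    IsIso (j ≫ (((Y ◁ MB.counit) ≫ (ρ_ Y).hom) ▷ (Y ⊗ B))) :=
  statement17_general MB MY k hk j hw hE
end
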